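/- Let r ≥ 1, b ≥ 1, n ≥ 2^{r+1}, q = 2^b, and 0 ≤ i ≤ r−1. Let (M_1, …, M_{2^{i+1}−1}) and (K_1, …, K_{2^{i+1}−1}) be two families of matrices in F_q^{n×n}, each matrix of rank exactly 2^{r−i}, such that within each family the row spaces of the members form a direct (independent) family of subspaces of F_q^n and likewise their column spaces form a direct family. For 0 ≤ j ≤ i set M̂_j = Σ_{k : G_Had^{(i)}(k,j)=1} M_k and K̂_j = Σ_{k : G_Had^{(i)}(k,j)=1} K_k. If the F₂-linear spans satisfy span_{F₂}{M̂_0, …, M̂_i} = span_{F₂}{K̂_0, …, K̂_i} (as F₂-subspaces of F_q^{n×n}), then {M_1, …, M_{2^{i+1}−1}} = {K_1, …, K_{2^{i+1}−1}} as sets. (Uniqueness of the minimal matrix set of a face.) -/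

import Mathlib

/-!
Write `g k` for row `k` of `GHad i`; these rows are exactly the nonzero vectors of
`F₂^{i+1}`. The `F₂`-span of the `X̂_j` is the image of the encoding
`c ↦ ∑_{⟨g k, c⟩ = 1} X k`, which is injective when the row spaces of the `X k` are
independent, so equal spans give a linear automorphism `e` of `F₂^{i+1}` with
`K̂(c) = M̂(e c)`; the transpose of `e⁻¹` permutes the nonzero vectors, i.e. induces a
permutation `σ` of the indices. Independence of the column spaces of the `K k` puts the row
space of `K k` inside the row space of every sum containing it, hence inside
`⨆_{⟨g l, d⟩ = 1} rowSpace (M l)` whenever `⟨g (σ k), d⟩ = 1`. Such a `d` can be chosen to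
separate `g (σ k)` from any other nonzero vector, so independence of the row spaces of the
`M l` leaves `rowSpace (K k) ≤ rowSpace (M (σ k))`, and comparing one encoded sum row by row
gives `K k = M (σ k)`.
-/

/-- The generator matrix `G_Had^{(i)}` of the length-`2^{i+1}−1` Hadamard code:
the entry in row `k` (zero-indexed; corresponding to the 1-indexed row `k+1`) and
column `j` is bit number `i − j` of the binary representation of `2^{i+1} − (k+1)`. -/
def GHad (i : ℕ) : Matrix (Fin (2 ^ (i + 1) - 1)) (Fin (i + 1)) (ZMod 2) :=
  fun k j => if Nat.testBit (2 ^ (i + 1) - (k.val + 1)) (i - j.val) then 1 else 0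

/-- The row space of a square matrix: the span of its rows. -/
def rowSpace {F : Type*} [Field F] {n : ℕ} (M : Matrix (Fin n) (Fin n) F) :
    Submodule F (Fin n → F) :=
  Submodule.span F (Set.range fun a => M a)

/-- The column space of a square matrix: the span of its columns. -/
def colSpace {F : Type*} [Field F] {n : ℕ} (M : Matrix (Fin n) (Fin n) F) :
    Submodule F (Fin n → F) :=
  Submodule.span F (Set.range fun a => fun b => M b a)

open Matrix Module Submodule

lemma iSupIndep.le_of_forall_le_biSup {R M ι : Type*} [Ring R] [AddCommGroup M] [Module R M]
    [Fintype ι] {p : ι → Submodule R M} (hp : iSupIndep p) {W : Submodule R M} {k₀ : ι}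
    (hW : W ≤ ⨆ i, p i)
    (hsep : ∀ k ≠ k₀, ∃ s : Finset ι, k ∉ s ∧ W ≤ ⨆ i ∈ s, p i) :
    W ≤ p k₀ := by
  classical
  intro x hx
  obtain ⟨u, hu⟩ := (mem_iSup_finset_iff_exists_sum (s := Finset.univ) p x).mp
    (by simpa using hW hx)
  have hu0 : ∀ k ≠ k₀, (u k : M) = 0 := by
    intro k hk
    obtain ⟨s, hks, hWs⟩ := hsep k hk
    obtain ⟨v, hv⟩ := (mem_iSup_finset_iff_exists_sum p x).mp (hWs hx)
    have hcomp := (iSupIndep_iff_finsetSum_eq_imp_eq p).mp hp Finset.univ (fun i => u i)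
      (fun i => if i ∈ s then (v i : M) else 0)
      (fun i _ => ⟨(u i).2, by split_ifs; exacts [(v i).2, zero_mem _]⟩)
      (by rw [hu, Finset.sum_ite_mem, Finset.univ_inter, hv]) k (Finset.mem_univ k)
    simpa [hks] using hcomp
  rw [← hu, Finset.sum_eq_single k₀ (fun k _ hk => hu0 k hk) (by simp)]
  exact (u k₀).2

lemma LinearMap.exists_linearEquiv_apply_eq_of_range_eq {K V W : Type*} [Field K]
    [AddCommGroup V] [Module K V] [FiniteDimensional K V] [AddCommGroup W] [Module K W]
    {f₁ f₂ : V →ₗ[K] W} (hf₁ : Function.Injective f₁) (h : range f₁ = range f₂) :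
    ∃ e : V ≃ₗ[K] V, ∀ c, f₂ c = f₁ (e c) := by
  let e₀ : V →ₗ[K] V := (LinearEquiv.ofInjective f₁ hf₁).symm.toLinearMap ∘ₗ
    f₂.codRestrict (range f₁) fun c => h ▸ mem_range_self f₂ c
  have he₀ : ∀ c, f₁ (e₀ c) = f₂ c := fun c =>
    congrArg Subtype.val ((LinearEquiv.ofInjective f₁ hf₁).apply_symm_apply _)
  have hsurj : Function.Surjective e₀ := fun c => by
    obtain ⟨c', hc'⟩ : f₁ c ∈ range f₂ := h ▸ mem_range_self f₁ c
    exact ⟨c', hf₁ (by rw [he₀, hc'])⟩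
  exact ⟨LinearEquiv.ofBijective e₀ ⟨injective_iff_surjective.mpr hsurj, hsurj⟩,
    fun c => (he₀ c).symm⟩

section RowSpace

variable {F : Type*} [Field F] {n : ℕ}

lemma rowSpace_eq_range_vecMulLinear (A : Matrix (Fin n) (Fin n) F) :
    rowSpace A = LinearMap.range A.vecMulLinear :=
  (range_vecMulLinear A).symm

lemma colSpace_eq_range_mulVecLin (A : Matrix (Fin n) (Fin n) F) :
    colSpace A = LinearMap.range A.mulVecLin :=
  (range_mulVecLin A).symm

lemma map_rowSpace_dotProductEquiv (A : Matrix (Fin n) (Fin n) F) :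
    (rowSpace A).map (dotProductEquiv F (Fin n)).toLinearMap =
      (LinearMap.ker A.mulVecLin).dualAnnihilator := by
  have hcomm : (dotProductEquiv F (Fin n)).toLinearMap ∘ₗ A.vecMulLinear =
      A.mulVecLin.dualMap ∘ₗ (dotProductEquiv F (Fin n)).toLinearMap := by
    ext y w
    simp
  rw [← LinearMap.range_dualMap_eq_dualAnnihilator_ker, rowSpace_eq_range_vecMulLinear,
    ← LinearMap.range_comp, hcomm, LinearMap.range_comp_of_range_eq_top _
      (LinearEquiv.range _)]

lemma rowSpace_le_rowSpace_of_ker_le {A B : Matrix (Fin n) (Fin n) F}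
    (h : LinearMap.ker A.mulVecLin ≤ LinearMap.ker B.mulVecLin) : rowSpace B ≤ rowSpace A := by
  rw [← map_le_map_iff_of_injective (dotProductEquiv F (Fin n)).injective,
    map_rowSpace_dotProductEquiv, map_rowSpace_dotProductEquiv]
  exact dualAnnihilator_anti h

lemma rowSpace_smul_le {S : Type*} [SMul S F] [IsScalarTower S F F] (s : S)
    (A : Matrix (Fin n) (Fin n) F) : rowSpace (s • A) ≤ rowSpace A :=
  span_le.mpr <| Set.range_subset_iff.mpr fun a => smul_of_tower_mem _ s (subset_span ⟨a, rfl⟩)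

variable {ι : Type*}

lemma sum_apply_row (X : ι → Matrix (Fin n) (Fin n) F) (s : Finset ι) (a : Fin n) :
    (∑ j ∈ s, X j) a = ∑ j ∈ s, X j a := by
  ext b
  simp [Matrix.sum_apply]

lemma ker_mulVecLin_sum_le {X : ι → Matrix (Fin n) (Fin n) F}
    (hX : iSupIndep fun k => colSpace (X k)) {s : Finset ι} {k : ι} (hk : k ∈ s) :
    LinearMap.ker (∑ j ∈ s, X j).mulVecLin ≤ LinearMap.ker (X k).mulVecLin := by
  intro v hv
  rw [LinearMap.mem_ker, mulVecLin_apply, sum_mulVec] at hv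
  refine (iSupIndep_iff_finsetSum_eq_zero_imp_eq_zero _).mp hX s (fun j => X j *ᵥ v)
    (fun j _ => ?_) hv k hk
  rw [colSpace_eq_range_mulVecLin]
  exact ⟨v, rfl⟩

lemma rowSpace_le_rowSpace_sum {X : ι → Matrix (Fin n) (Fin n) F}
    (hX : iSupIndep fun k => colSpace (X k)) {s : Finset ι} {k : ι} (hk : k ∈ s) :
    rowSpace (X k) ≤ rowSpace (∑ j ∈ s, X j) :=
  rowSpace_le_rowSpace_of_ker_le (ker_mulVecLin_sum_le hX hk)

lemma rowSpace_sum_le (X : ι → Matrix (Fin n) (Fin n) F) (s : Finset ι) :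
    rowSpace (∑ j ∈ s, X j) ≤ ⨆ j ∈ s, rowSpace (X j) := by
  refine span_le.mpr <| Set.range_subset_iff.mpr fun a => ?_
  rw [SetLike.mem_coe, sum_apply_row]
  exact sum_mem_biSup fun j _ => subset_span ⟨a, rfl⟩

lemma eq_of_rowSpace_le_of_sum_eq [Fintype ι] {R : ι → Submodule F (Fin n → F)}
    (hR : iSupIndep R) {X Y : ι → Matrix (Fin n) (Fin n) F} (hX : ∀ k, rowSpace (X k) ≤ R k)
    (hY : ∀ k, rowSpace (Y k) ≤ R k) (h : ∑ k, X k = ∑ k, Y k) : X = Y := by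
  funext k
  ext a b
  have hrows := (iSupIndep_iff_finsetSum_eq_imp_eq R).mp hR Finset.univ (fun j => X j a)
    (fun j => Y j a)
    (fun j _ => ⟨hX j (subset_span ⟨a, rfl⟩), hY j (subset_span ⟨a, rfl⟩)⟩)
    (by simpa only [sum_apply_row] using congrFun h a) k (Finset.mem_univ k)
  exact congrFun hrows b

lemma linearIndependent_of_iSupIndep_rowSpace [Fintype ι] {X : ι → Matrix (Fin n) (Fin n) F}
    (hX : iSupIndep fun k => rowSpace (X k)) (hX0 : ∀ k, X k ≠ 0) : LinearIndependent F X := by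
  refine Fintype.linearIndependent_iff.mpr fun c hc k => ?_
  have hzero := congrFun (eq_of_rowSpace_le_of_sum_eq hX (X := fun k => c k • X k)
    (Y := fun k => (0 : F) • X k) (fun k => rowSpace_smul_le _ _)
    (fun k => rowSpace_smul_le _ _) (by simpa using hc)) k
  rw [zero_smul, smul_eq_zero] at hzero
  exact hzero.resolve_right (hX0 k)

end RowSpace

section ZModTwo

variable {p : ℕ}

lemma zmod_two_smul_eq_ite {V : Type*} [AddCommGroup V] [Module (ZMod 2) V] (a : ZMod 2)
    (x : V) : a • x = if a = 1 then x else 0 := by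
  obtain rfl | rfl : a = 0 ∨ a = 1 := by revert a; decide
  exacts [zero_smul _ x, one_smul _ x]

lemma exists_dotProduct_eq_one {u : Fin p → ZMod 2} (hu : u ≠ 0) : ∃ d, u ⬝ᵥ d = 1 := by
  obtain ⟨d, hd⟩ := not_forall.mp (mt (dotProduct_eq_zero u) hu)
  have h01 : ∀ a : ZMod 2, a ≠ 0 → a = 1 := by decide
  exact ⟨d, h01 _ hd⟩

lemma exists_dotProduct_eq_one_and_eq_zero {u v : Fin p → ZMod 2} (hu : u ≠ 0) (huv : u ≠ v) :
    ∃ d, u ⬝ᵥ d = 1 ∧ v ⬝ᵥ d = 0 := by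
  obtain ⟨d₀, hd₀⟩ := exists_dotProduct_eq_one hu
  obtain ⟨d₁, hd₁⟩ := not_forall.mp (mt dotProduct_eq_iff.mp huv)
  have key : ∀ a b a' b' : ZMod 2, a = 1 → a' ≠ b' →
      (a = 1 ∧ b = 0) ∨ (a' = 1 ∧ b' = 0) ∨ (a + a' = 1 ∧ b + b' = 0) := by decide
  rcases key _ (v ⬝ᵥ d₀) _ (v ⬝ᵥ d₁) hd₀ hd₁ with h | h | h
  exacts [⟨d₀, h⟩, ⟨d₁, h⟩, ⟨d₀ + d₁, by simpa only [dotProduct_add] using h⟩]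

end ZModTwo

section HadamardSum

variable {ι : Type*} [Fintype ι] {p : ℕ} {V : Type*} [AddCommGroup V] [Module (ZMod 2) V]
  {g : ι → Fin p → ZMod 2}

/-- For `g = GHad i`, the value at `Pi.single j 1` is the paper's `X̂_j`. -/
def hadamardSum (g : ι → Fin p → ZMod 2) (X : ι → V) :
    (Fin p → ZMod 2) →ₗ[ZMod 2] V :=
  Fintype.linearCombination (ZMod 2) X ∘ₗ (Matrix.of g).mulVecLin

lemma hadamardSum_apply (X : ι → V) (c : Fin p → ZMod 2) :
    hadamardSum g X c = ∑ k, (g k ⬝ᵥ c) • X k :=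
  Fintype.linearCombination_apply _ _ _

lemma hadamardSum_eq_sum_filter (X : ι → V) (c : Fin p → ZMod 2) :
    hadamardSum g X c = ∑ k ∈ Finset.univ.filter (fun k => g k ⬝ᵥ c = 1), X k := by
  simp_rw [hadamardSum_apply, zmod_two_smul_eq_ite, Finset.sum_filter]

lemma span_range_sum_filter_eq_range_hadamardSum (X : ι → V) :
    span (ZMod 2) (Set.range fun j => ∑ k ∈ Finset.univ.filter (fun k => g k j = 1), X k) =
      LinearMap.range (hadamardSum g X) := by
  have hcols : (fun j => ∑ k ∈ Finset.univ.filter (fun k => g k j = 1), X k) =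
      hadamardSum g X ∘ Pi.basisFun (ZMod 2) (Fin p) := by
    funext j
    simp [hadamardSum_eq_sum_filter]
  rw [hcols, Set.range_comp, span_image, (Pi.basisFun _ _).span_eq, Submodule.map_top]

lemma hadamardSum_injective {X : ι → V} (hX : LinearIndependent (ZMod 2) X)
    (hg : ∀ j, Pi.single j 1 ∈ Set.range g) : Function.Injective (hadamardSum g X) := by
  refine hX.fintypeLinearCombination_injective.comp fun c c' h => funext fun j => ?_
  obtain ⟨k, hk⟩ := hg j
  simpa [mulVec, hk] using congrFun h k

lemma exists_perm_dotProduct_apply_eq (hg : Function.Injective g) (hrange : Set.range g = {0}ᶜ)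
    (e : (Fin p → ZMod 2) ≃ₗ[ZMod 2] (Fin p → ZMod 2)) :
    ∃ σ : Equiv.Perm ι, ∀ k c, g (σ k) ⬝ᵥ e c = g k ⬝ᵥ c := by
  have hdual :
      ∀ k c, (g k ᵥ* LinearMap.toMatrix' e.symm.toLinearMap) ⬝ᵥ e c = g k ⬝ᵥ c := by
    intro k c
    rw [← dotProduct_mulVec, LinearMap.toMatrix'_mulVec, LinearEquiv.coe_coe,
      LinearEquiv.symm_apply_apply]
  have hmem : ∀ k, g k ᵥ* LinearMap.toMatrix' e.symm.toLinearMap ∈ Set.range g := by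
    intro k
    have hk : g k ∈ Set.range g := ⟨k, rfl⟩
    rw [hrange, Set.mem_compl_singleton_iff] at hk ⊢
    intro h0
    exact hk (dotProduct_eq_zero _ fun c => by
      rw [← e.apply_symm_apply c, ← hdual, h0, zero_dotProduct])
  choose σ hσ using hmem
  have hσ' : ∀ k c, g (σ k) ⬝ᵥ e c = g k ⬝ᵥ c := fun k c => by rw [hσ, hdual]
  have hinj : Function.Injective σ := fun k k' h => hg <| dotProduct_eq_iff.mp fun c => by
    rw [← hσ' k c, ← hσ' k' c, h]
  exact ⟨Equiv.ofBijective σ (Finite.injective_iff_bijective.mp hinj), hσ'⟩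

end HadamardSum

section HadamardGenerator

/-- Row `k` of `GHad i` is definitionally `bitVector i (2 ^ (i + 1) - (k + 1))`. -/
def bitVector (i m : ℕ) : Fin (i + 1) → ZMod 2 :=
  fun j => if m.testBit (i - j) then 1 else 0

lemma bitVector_zero (i : ℕ) : bitVector i 0 = 0 := by
  funext j
  simp [bitVector]

lemma bitVector_injOn (i : ℕ) : Set.InjOn (bitVector i) (Set.Iio (2 ^ (i + 1))) := by
  intro m hm m' hm' h
  refine Nat.eq_of_testBit_eq fun t => ?_
  rcases le_or_gt t i with ht | ht
  · have hbit := congrFun h ⟨i - t, by omega⟩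
    simp only [bitVector, show i - (i - t) = t by omega] at hbit
    revert hbit
    cases m.testBit t <;> cases m'.testBit t <;> decide
  · have h2 : 2 ^ (i + 1) ≤ 2 ^ t := Nat.pow_le_pow_right two_pos ht
    rw [Nat.testBit_eq_false_of_lt (lt_of_lt_of_le hm h2),
      Nat.testBit_eq_false_of_lt (lt_of_lt_of_le hm' h2)]

variable (i : ℕ)

lemma GHad_injective : Function.Injective (GHad i) := by
  intro k k' h
  have hpos := Nat.one_le_two_pow (n := i + 1)
  have := bitVector_injOn i (show _ < 2 ^ (i + 1) by omega) (show _ < 2 ^ (i + 1) by omega) h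
  ext
  omega

lemma GHad_ne_zero (k : Fin (2 ^ (i + 1) - 1)) : GHad i k ≠ 0 := by
  intro h
  have hpos := Nat.one_le_two_pow (n := i + 1)
  have := bitVector_injOn i (show _ < 2 ^ (i + 1) by omega) (show 0 < 2 ^ (i + 1) by omega)
    (h.trans (bitVector_zero i).symm)
  omega

lemma range_GHad : Set.range (GHad i) = {0}ᶜ := by
  refine (Set.range_subset_iff.mpr (GHad_ne_zero i)).antisymm fun v hv => ?_
  let f : Fin (2 ^ (i + 1) - 1) → {v : Fin (i + 1) → ZMod 2 // v ≠ 0} :=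
    fun k => ⟨GHad i k, GHad_ne_zero i k⟩
  have hf : Function.Bijective f := by
    refine (Fintype.bijective_iff_injective_and_card f).mpr
      ⟨fun k k' h => GHad_injective i (congrArg Subtype.val h), ?_⟩
    rw [Fintype.card_subtype_compl, Fintype.card_subtype_eq]
    simp [ZMod.card]
  obtain ⟨k, hk⟩ := hf.2 ⟨v, hv⟩
  exact ⟨k, congrArg Subtype.val hk⟩

end HadamardGenerator

section Uniqueness

variable {ι : Type*} [Fintype ι] {p : ℕ} {g : ι → Fin p → ZMod 2}
  {F : Type*} [Field F] [Algebra (ZMod 2) F] {n : ℕ} {X Y : ι → Matrix (Fin n) (Fin n) F}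

lemma rowSpace_le_rowSpace_hadamardSum (hY : iSupIndep fun k => colSpace (Y k)) {k : ι}
    {c : Fin p → ZMod 2} (hc : g k ⬝ᵥ c = 1) :
    rowSpace (Y k) ≤ rowSpace (hadamardSum g Y c) := by
  rw [hadamardSum_eq_sum_filter]
  exact rowSpace_le_rowSpace_sum hY (Finset.mem_filter.mpr ⟨Finset.mem_univ k, hc⟩)

lemma rowSpace_hadamardSum_le (c : Fin p → ZMod 2) :
    rowSpace (hadamardSum g X c) ≤
      ⨆ k ∈ Finset.univ.filter (fun k => g k ⬝ᵥ c = 1), rowSpace (X k) := by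
  rw [hadamardSum_eq_sum_filter]
  exact rowSpace_sum_le X _

lemma rowSpace_le_rowSpace_of_hadamardSum_eq (hg : Function.Injective g) (hg0 : ∀ k, g k ≠ 0)
    (hXrow : iSupIndep fun k => rowSpace (X k)) (hYcol : iSupIndep fun k => colSpace (Y k))
    {e : (Fin p → ZMod 2) ≃ₗ[ZMod 2] (Fin p → ZMod 2)}
    (he : ∀ c, hadamardSum g Y c = hadamardSum g X (e c)) {σ : ι → ι}
    (hσ : ∀ k c, g (σ k) ⬝ᵥ e c = g k ⬝ᵥ c) (k : ι) :
    rowSpace (Y k) ≤ rowSpace (X (σ k)) := by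
  have hle : ∀ d, g (σ k) ⬝ᵥ d = 1 →
      rowSpace (Y k) ≤
        ⨆ i ∈ Finset.univ.filter (fun i => g i ⬝ᵥ d = 1), rowSpace (X i) := by
    intro d hd
    calc rowSpace (Y k) ≤ rowSpace (hadamardSum g Y (e.symm d)) :=
          rowSpace_le_rowSpace_hadamardSum hYcol (by rw [← hσ, e.apply_symm_apply, hd])
      _ = rowSpace (hadamardSum g X d) := by rw [he, e.apply_symm_apply]
      _ ≤ _ := rowSpace_hadamardSum_le d
  refine hXrow.le_of_forall_le_biSup ?_ fun k' hk' => ?_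
  · obtain ⟨d, hd⟩ := exists_dotProduct_eq_one (hg0 (σ k))
    exact (hle d hd).trans (iSup₂_le fun i _ => le_iSup (fun i => rowSpace (X i)) i)
  · obtain ⟨d, hd1, hd0⟩ := exists_dotProduct_eq_one_and_eq_zero (hg0 (σ k)) (hg.ne hk'.symm)
    exact ⟨_, by simp [hd0], hle d hd1⟩

lemma eq_comp_of_hadamardSum_eq (hg : Function.Injective g) (hg0 : ∀ k, g k ≠ 0)
    (hXrow : iSupIndep fun k => rowSpace (X k)) (hYcol : iSupIndep fun k => colSpace (Y k))
    {e : (Fin p → ZMod 2) ≃ₗ[ZMod 2] (Fin p → ZMod 2)}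
    (he : ∀ c, hadamardSum g Y c = hadamardSum g X (e c)) {σ : Equiv.Perm ι}
    (hσ : ∀ k c, g (σ k) ⬝ᵥ e c = g k ⬝ᵥ c) :
    Y = X ∘ σ := by
  funext k
  obtain ⟨d, hd⟩ := exists_dotProduct_eq_one (hg0 (σ k))
  have hsum : ∑ i, (g i ⬝ᵥ e.symm d) • Y i = ∑ i, (g i ⬝ᵥ e.symm d) • X (σ i) := by
    rw [← hadamardSum_apply, he, hadamardSum_apply, ← Equiv.sum_comp σ]
    simp_rw [hσ]
  have hk := congrFun (eq_of_rowSpace_le_of_sum_eq (hXrow.comp σ.injective)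
    (fun i => (rowSpace_smul_le _ _).trans
      (rowSpace_le_rowSpace_of_hadamardSum_eq hg hg0 hXrow hYcol he hσ i))
    (fun i => rowSpace_smul_le _ _) hsum) k
  rwa [← hσ, e.apply_symm_apply, hd, one_smul, one_smul] at hk

theorem exists_perm_eq_comp_of_range_hadamardSum_eq (hg : Function.Injective g)
    (hrange : Set.range g = {0}ᶜ) (hX0 : ∀ k, X k ≠ 0)
    (hXrow : iSupIndep fun k => rowSpace (X k))
    (hYcol : iSupIndep fun k => colSpace (Y k))
    (h : LinearMap.range (hadamardSum g X) = LinearMap.range (hadamardSum g Y)) :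
    ∃ σ : Equiv.Perm ι, Y = X ∘ σ := by
  have hg0 : ∀ k, g k ≠ 0 := fun k => (hrange.subset ⟨k, rfl⟩ : g k ∈ ({0}ᶜ : Set _))
  have hXli : LinearIndependent (ZMod 2) X :=
    (linearIndependent_of_iSupIndep_rowSpace hXrow hX0).restrict_scalars' (ZMod 2)
  obtain ⟨e, he⟩ := LinearMap.exists_linearEquiv_apply_eq_of_range_eq
    (hadamardSum_injective hXli fun j => hrange ▸ by simp) h
  obtain ⟨σ, hσ⟩ := exists_perm_dotProduct_apply_eq hg hrange e
  exact ⟨σ, eq_comp_of_hadamardSum_eq hg hg0 hXrow hYcol he hσ⟩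

end Uniqueness

theorem stmt7_general (r b n i : ℕ)
    (M K : Fin (2 ^ (i + 1) - 1) → Matrix (Fin n) (Fin n) (GaloisField 2 b))
    (hMrank : ∀ k, (M k).rank = 2 ^ (r - i))
    (hMrow : ∀ k, rowSpace (M k) ⊓ (⨆ (k') (_ : k' ≠ k), rowSpace (M k')) = ⊥)
    (hKcol : ∀ k, colSpace (K k) ⊓ (⨆ (k') (_ : k' ≠ k), colSpace (K k')) = ⊥)
    (hspan :
      Submodule.span (ZMod 2) (Set.range (fun j : Fin (i + 1) =>
        ∑ k ∈ Finset.univ.filter (fun k => GHad i k j = 1), M k)) =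
      Submodule.span (ZMod 2) (Set.range (fun j : Fin (i + 1) =>
        ∑ k ∈ Finset.univ.filter (fun k => GHad i k j = 1), K k))) :
    Set.range M = Set.range K := by
  have hM0 : ∀ k, M k ≠ 0 := fun k hk =>
    (pow_pos two_pos (r - i)).ne (by simpa [hk] using hMrank k)
  rw [span_range_sum_filter_eq_range_hadamardSum (g := GHad i),
    span_range_sum_filter_eq_range_hadamardSum (g := GHad i)] at hspan
  obtain ⟨σ, rfl⟩ := exists_perm_eq_comp_of_range_hadamardSum_eq (GHad_injective i)
    (range_GHad i) hM0 (fun k => disjoint_iff.mpr (hMrow k))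
    (fun k => disjoint_iff.mpr (hKcol k)) hspan
  exact (EquivLike.range_comp M σ).symm

/-- (Uniqueness of the minimal matrix set of a face.) Let
`M₁, …, M_{2^{i+1}−1}` and `K₁, …, K_{2^{i+1}−1}` be families of rank-`2^{r−i}`
matrices in `F_q^{n×n}`, each family having independent row spaces and independent
column spaces. If the `F₂`-spans of `{M̂₀, …, M̂_i}` and `{K̂₀, …, K̂_i}` agree,
where `M̂_j = Σ_{k : G_Had^{(i)}(k,j)=1} M_k` (and similarly for `K̂`), then the two
families coincide as sets. -/
theorem stmt7 (r b n i : ℕ) (hr : 1 ≤ r) (hb : 1 ≤ b) (hn : 2 ^ (r + 1) ≤ n)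
    (hi : i + 1 ≤ r)
    (M K : Fin (2 ^ (i + 1) - 1) → Matrix (Fin n) (Fin n) (GaloisField 2 b))
    (hMrank : ∀ k, (M k).rank = 2 ^ (r - i))
    (hKrank : ∀ k, (K k).rank = 2 ^ (r - i))
    (hMrow : ∀ k, rowSpace (M k) ⊓ (⨆ (k') (_ : k' ≠ k), rowSpace (M k')) = ⊥)
    (hMcol : ∀ k, colSpace (M k) ⊓ (⨆ (k') (_ : k' ≠ k), colSpace (M k')) = ⊥)
    (hKrow : ∀ k, rowSpace (K k) ⊓ (⨆ (k') (_ : k' ≠ k), rowSpace (K k')) = ⊥)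
    (hKcol : ∀ k, colSpace (K k) ⊓ (⨆ (k') (_ : k' ≠ k), colSpace (K k')) = ⊥)
    (hspan :
      Submodule.span (ZMod 2) (Set.range (fun j : Fin (i + 1) =>
        ∑ k ∈ Finset.univ.filter (fun k => GHad i k j = 1), M k)) =
      Submodule.span (ZMod 2) (Set.range (fun j : Fin (i + 1) =>
        ∑ k ∈ Finset.univ.filter (fun k => GHad i k j = 1), K k))) :
    Set.range M = Set.range K :=
  stmt7_general r b n i M K hMrank hMrow hKcol hspan
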